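/- arXiv:2602.05704 — 3 statements merged into one kernel-verified Lean document; each statement's English description precedes it below -/
import Mathlib

section
/- Let T, d be positive integers, let (F_t)_{t=0}^T be a filtration, let (a_t)_{t=1}^T be a real-valued process with a_t F_t-measurable and |a_t| ≤ β_t almost surely for fixed constants β_t > 0, and let x_1, …, x_T be i.i.d. ℝ^d-valued random vectors such that x_t is F_t-measurable and independent of F_{t−1}, and such that E‖x‖² = α₂ d and P(| ‖x‖² − α₂ d | ≥ γ) ≤ 2 exp(−min(γ²/(K₂⁴ d), γ/K₂²)) for all γ > 0, where α₂, K₂ > 0. Then there exists a universal constant c > 0 such that for every δ ∈ (0,1), if d ≥ max(16 K₂⁴/α₂², 4 K₂²/α₂) · log(2T/δ), then with probability at least 1 − δ it holds for all t ∈ {1, …, T} that Σ_{j=1}^t a_j² ‖x_j‖² ≥ (α₂ d / 2) · ( Σ_{j=1}^t E[a_j² | F_{j−1}] − c · sqrt( (Σ_{j=1}^t β_j⁴) · log(4T/δ) ) ). -/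
/-!
On the event that every `‖x_j‖²` is within `α₂ d / 2` of its mean we have `‖x_j‖² ≥ α₂ d / 2`,
so it suffices to bound `∑ a_j²` from below. The increments `E[a_j² | F_{j-1}] - a_j²` are
martingale differences bounded by `β_j²`, so the Azuma–Hoeffding inequality bounds the probability
that their partial sum up to `t` exceeds `√(2 ∑ β_j⁴ log (4T/δ))` by `δ/(4T)`, while the dimension
condition bounds each norm-deviation event by `δ/(2T)`. A union bound over `t` gives `c = √2`.
-/

open MeasureTheory ProbabilityTheory

noncomputable section

/-- Euclidean norm on `Fin n → ℝ`. -/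
def euclNorm {n : ℕ} (v : Fin n → ℝ) : ℝ := Real.sqrt (∑ i, v i ^ 2)

open Real Finset

theorem exp_mul_le_cosh_add_div_mul_sinh {x b : ℝ} (hb : 0 < b) (hx : |x| ≤ b) (s : ℝ) :
    exp (s * x) ≤ cosh (s * b) + x / b * sinh (s * b) := by
  obtain ⟨hxl, hxu⟩ := abs_le.1 hx
  set θ := (b - x) / (2 * b)
  have hθ0 : 0 ≤ θ := div_nonneg (by linarith) (by linarith)
  have hθ1 : 0 ≤ 1 - θ := by rw [sub_nonneg, div_le_one (by linarith)]; linarith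
  have hconv := convexOn_exp.2 (Set.mem_univ (-(s * b))) (Set.mem_univ (s * b)) hθ0 hθ1 (by ring)
  have hcomb : θ • (-(s * b)) + (1 - θ) • (s * b) = s * x := by
    simp only [smul_eq_mul, θ]
    field_simp
    ring
  rw [hcomb] at hconv
  refine hconv.trans_eq ?_
  simp only [smul_eq_mul, cosh_eq, sinh_eq, θ]
  field_simp
  ring

theorem two_mul_exp_neg_min_le_inv {α K d r : ℝ} (hα : 0 < α) (hK : 0 < K) (hd : 0 < d)
    (hr : 2 ≤ r) (hdim : max (16 * K ^ 4 / α ^ 2) (4 * K ^ 2 / α) * log r ≤ d) :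
    2 * exp (-(min ((α * d / 2) ^ 2 / (K ^ 4 * d)) (α * d / 2 / K ^ 2))) ≤ r⁻¹ := by
  have hr0 : 0 < r := by linarith
  have hL : 0 ≤ log r := log_nonneg (by linarith)
  have h₁ := (mul_le_mul_of_nonneg_right (le_max_left _ _) hL).trans hdim
  have h₂ := (mul_le_mul_of_nonneg_right (le_max_right _ _) hL).trans hdim
  rw [div_mul_eq_mul_div, div_le_iff₀ (by positivity)] at h₁ h₂
  have hmin : 2 * log r ≤ min ((α * d / 2) ^ 2 / (K ^ 4 * d)) (α * d / 2 / K ^ 2) := by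
    refine le_min ?_ ?_ <;> rw [le_div_iff₀ (by positivity)] <;> nlinarith
  have hexp : exp (-(2 * log r)) = (r ^ 2)⁻¹ := by
    rw [exp_neg, show 2 * log r = log r + log r by ring, exp_add, exp_log hr0, sq]
  calc _ ≤ 2 * exp (-(2 * log r)) := by gcongr
    _ ≤ r⁻¹ := by
        rw [hexp]
        field_simp
        linarith

theorem exp_neg_sq_sqrt_div_eq_inv {V r : ℝ} (hV : 0 < V) (hr : 1 ≤ r) :
    exp (-(√2 * √(V * log r)) ^ 2 / (2 * V)) = r⁻¹ := by
  rw [mul_pow, sq_sqrt zero_le_two, sq_sqrt (mul_nonneg hV.le (log_nonneg hr)),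
    show -(2 * (V * log r)) / (2 * V) = -log r by field_simp, exp_neg, exp_log (by linarith)]

theorem mul_sum_sub_le_sum_sq_mul {ι : Type*} {s : Finset ι} {g a n : ι → ℝ} {c ε : ℝ}
    (hc : 0 ≤ c) (hn : ∀ j ∈ s, c ≤ n j) (hε : ∑ j ∈ s, (g j - a j ^ 2) ≤ ε) :
    c * (∑ j ∈ s, g j - ε) ≤ ∑ j ∈ s, a j ^ 2 * n j := by
  rw [sum_sub_distrib] at hε
  calc c * (∑ j ∈ s, g j - ε) ≤ ∑ j ∈ s, a j ^ 2 * c := by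
        rw [← sum_mul, mul_comm]
        gcongr
        linarith
    _ ≤ ∑ j ∈ s, a j ^ 2 * n j := by
        gcongr with j hj
        exact hn j hj

variable {Ω : Type*} {m m₀ : MeasurableSpace Ω} {μ : Measure Ω}

theorem integrable_exp_mul_sum_of_abs_le [IsFiniteMeasure μ] {ι : Type*} {s : Finset ι}
    {X : ι → Ω → ℝ} {b : ι → ℝ} (hX : ∀ i ∈ s, AEMeasurable (X i) μ)
    (hXb : ∀ i ∈ s, ∀ᵐ ω ∂μ, |X i ω| ≤ b i) (r : ℝ) :
    Integrable (fun ω ↦ exp (r * ∑ i ∈ s, X i ω)) μ := by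
  refine integrable_exp_mul_of_mem_Icc (a := -∑ i ∈ s, b i) (b := ∑ i ∈ s, b i)
    (Finset.aemeasurable_fun_sum s hX) ?_
  filter_upwards [(Filter.eventually_all_finset s).2 hXb] with ω hω
  exact abs_le.1 ((abs_sum_le_sum_abs _ _).trans (sum_le_sum hω))

theorem condExp_exp_mul_le_of_abs_le [IsFiniteMeasure μ] (hm : m ≤ m₀) {X : Ω → ℝ}
    (hX : AEMeasurable X μ) {b : ℝ} (hb : 0 < b) (hXb : ∀ᵐ ω ∂μ, |X ω| ≤ b)
    (hXc : μ[X | m] =ᵐ[μ] 0) (s : ℝ) :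
    μ[fun ω ↦ exp (s * X ω) | m] ≤ᵐ[μ] fun _ ↦ exp (s ^ 2 * b ^ 2 / 2) := by
  have hXi : Integrable X μ := Integrable.of_mem_Icc (-b) b hX (hXb.mono fun _ h ↦ abs_le.1 h)
  set k := sinh (s * b) / b
  have hchord : μ[fun ω ↦ exp (s * X ω) | m]
      ≤ᵐ[μ] μ[(fun _ ↦ cosh (s * b)) + k • X | m] := by
    refine condExp_mono (integrable_exp_mul_of_mem_Icc hX (hXb.mono fun _ h ↦ abs_le.1 h))
      ((integrable_const _).add (hXi.smul k)) (hXb.mono fun ω h ↦ ?_)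
    refine (exp_mul_le_cosh_add_div_mul_sinh hb h s).trans_eq ?_
    simp only [Pi.add_apply, Pi.smul_apply, smul_eq_mul, k]
    ring
  filter_upwards [hchord, condExp_add (integrable_const (cosh (s * b))) (hXi.smul k) m,
    condExp_smul k X m, hXc] with ω hω hadd hsmul hc
  rw [hadd, Pi.add_apply, condExp_const hm, hsmul, Pi.smul_apply, hc] at hω
  simp only [Pi.zero_apply, smul_zero, add_zero] at hω
  exact hω.trans (by simpa only [mul_pow] using cosh_le_exp_half_sq (s * b))

theorem integral_mul_le_of_condExp_le [IsFiniteMeasure μ] (hm : m ≤ m₀) {f g : Ω → ℝ}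
    (hf : StronglyMeasurable[m] f) (hf0 : 0 ≤ f) (hfi : Integrable f μ) (hgi : Integrable g μ)
    (hfgi : Integrable (f * g) μ) {K : ℝ} (hgK : μ[g | m] ≤ᵐ[μ] fun _ ↦ K) :
    ∫ ω, f ω * g ω ∂μ ≤ K * ∫ ω, f ω ∂μ := by
  have hpull : μ[f * g | m] =ᵐ[μ] f * μ[g | m] :=
    condExp_mul_of_stronglyMeasurable_left hf hfgi hgi
  calc ∫ ω, f ω * g ω ∂μ = ∫ ω, (μ[f * g | m]) ω ∂μ := (integral_condExp hm).symm
    _ = ∫ ω, f ω * (μ[g | m]) ω ∂μ := integral_congr_ae hpull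
    _ ≤ ∫ ω, f ω * K ∂μ :=
      integral_mono_ae (integrable_condExp.congr hpull) (hfi.mul_const K)
        (hgK.mono fun ω h ↦ mul_le_mul_of_nonneg_left h (hf0 ω))
    _ = K * ∫ ω, f ω ∂μ := by rw [integral_mul_const, mul_comm]

theorem abs_condExp_sub_le [IsFiniteMeasure μ] (hm : m ≤ m₀) {Y : Ω → ℝ} (hYi : Integrable Y μ)
    {B : ℝ} (hY0 : 0 ≤ᵐ[μ] Y) (hYB : Y ≤ᵐ[μ] fun _ ↦ B) :
    ∀ᵐ ω ∂μ, |μ[Y | m] ω - Y ω| ≤ B := by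
  have hup := condExp_mono (m := m) hYi (integrable_const B) hYB
  rw [condExp_const hm] at hup
  filter_upwards [hup, condExp_nonneg (m := m) hY0, hY0, hYB] with ω h1 h2 h3 h4
  simp only [Pi.zero_apply] at h2 h3
  rw [abs_le]
  constructor <;> linarith

theorem condExp_condExp_sub_self (hm : m ≤ m₀) [SigmaFinite (μ.trim hm)] {Y : Ω → ℝ}
    (hYi : Integrable Y μ) : μ[μ[Y | m] - Y | m] =ᵐ[μ] 0 := by
  filter_upwards [condExp_sub integrable_condExp hYi m] with ω h
  rw [h, condExp_of_stronglyMeasurable hm stronglyMeasurable_condExp integrable_condExp]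
  simp

theorem ofReal_one_sub_le_measure_of_forall_notMem [IsProbabilityMeasure μ] {ι : Type*}
    (s : Finset ι) {E : ι → Set Ω} {G : Set Ω} {p : ℝ} (hE : ∀ i ∈ s, μ.real (E i) ≤ p)
    (hG : ∀ ω, (∀ i ∈ s, ω ∉ E i) → ω ∈ G) :
    ENNReal.ofReal (1 - #s * p) ≤ μ G := by
  have hbad : μ.real (⋃ i ∈ s, E i) ≤ #s * p := by
    simpa using (measureReal_biUnion_finset_le s E).trans (sum_le_sum hE)
  have hcover : Set.univ ⊆ G ∪ ⋃ i ∈ s, E i := by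
    intro ω _
    by_cases h : ∀ i ∈ s, ω ∉ E i
    · exact Or.inl (hG ω h)
    · push Not at h
      exact Or.inr (Set.mem_biUnion h.choose_spec.1 h.choose_spec.2)
  have hsplit := (measureReal_mono (μ := μ) hcover).trans (measureReal_union_le G _)
  rw [probReal_univ] at hsplit
  rw [← ofReal_measureReal]
  exact ENNReal.ofReal_le_ofReal (by linarith)

section Azuma

variable [IsProbabilityMeasure μ] {F : ℕ → MeasurableSpace Ω} {D : ℕ → Ω → ℝ} {b : ℕ → ℝ}

-- Mathlib's `measure_sum_ge_le_of_hasCondSubgaussianMGF` needs `StandardBorelSpace Ω`, which the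
-- sample space here need not be, so the exponential-moment induction is done directly.
theorem mgf_sum_Icc_le (hFmono : Monotone F) (hF : ∀ j, F j ≤ m₀) {t : ℕ}
    (hb : ∀ j ∈ Icc 1 t, 0 < b j) (hD : ∀ j ∈ Icc 1 t, StronglyMeasurable[F j] (D j))
    (hDb : ∀ j ∈ Icc 1 t, ∀ᵐ ω ∂μ, |D j ω| ≤ b j)
    (hDc : ∀ j ∈ Icc 1 t, μ[D j | F (j - 1)] =ᵐ[μ] 0) (s : ℝ) :
    mgf (fun ω ↦ ∑ j ∈ Icc 1 t, D j ω) μ s ≤ exp (s ^ 2 * (∑ j ∈ Icc 1 t, b j ^ 2) / 2) := by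
  induction t with
  | zero => simp [mgf]
  | succ t ih =>
    have hsub : Icc 1 t ⊆ Icc 1 (t + 1) := Icc_subset_Icc_right t.le_succ
    have hlast : t + 1 ∈ Icc 1 (t + 1) := by simp
    have hmeas : ∀ j ∈ Icc 1 (t + 1), AEMeasurable (D j) μ :=
      fun j hj ↦ ((hD j hj).mono (hF j)).measurable.aemeasurable
    have hS : StronglyMeasurable[F t] fun ω ↦ ∑ j ∈ Icc 1 t, D j ω :=
      Finset.stronglyMeasurable_fun_sum _ fun j hj ↦
        (hD j (hsub hj)).mono (hFmono (mem_Icc.1 hj).2)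
    have hprod := integrable_exp_mul_sum_of_abs_le hmeas hDb s
    simp only [sum_Icc_succ_top (Nat.le_add_left 1 t), mul_add, exp_add] at hprod
    calc mgf (fun ω ↦ ∑ j ∈ Icc 1 (t + 1), D j ω) μ s
        = ∫ ω, exp (s * ∑ j ∈ Icc 1 t, D j ω) * exp (s * D (t + 1) ω) ∂μ := by
          simp only [mgf, sum_Icc_succ_top (Nat.le_add_left 1 t), mul_add, exp_add]
      _ ≤ exp (s ^ 2 * b (t + 1) ^ 2 / 2) * mgf (fun ω ↦ ∑ j ∈ Icc 1 t, D j ω) μ s :=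
          integral_mul_le_of_condExp_le (hF t)
            (continuous_exp.comp_stronglyMeasurable (hS.const_mul s)) (fun _ ↦ (exp_pos _).le)
            (integrable_exp_mul_sum_of_abs_le (fun j hj ↦ hmeas j (hsub hj))
              (fun j hj ↦ hDb j (hsub hj)) s)
            (integrable_exp_mul_of_mem_Icc (hmeas _ hlast)
              ((hDb _ hlast).mono fun _ h ↦ abs_le.1 h)) hprod
            (condExp_exp_mul_le_of_abs_le (hF t) (hmeas _ hlast) (hb _ hlast) (hDb _ hlast)
              (by simpa using hDc _ hlast) s)
      _ ≤ exp (s ^ 2 * b (t + 1) ^ 2 / 2) * exp (s ^ 2 * (∑ j ∈ Icc 1 t, b j ^ 2) / 2) := by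
          gcongr
          exact ih (fun j hj ↦ hb j (hsub hj)) (fun j hj ↦ hD j (hsub hj))
            (fun j hj ↦ hDb j (hsub hj)) (fun j hj ↦ hDc j (hsub hj))
      _ = exp (s ^ 2 * (∑ j ∈ Icc 1 (t + 1), b j ^ 2) / 2) := by
          rw [← exp_add, sum_Icc_succ_top (Nat.le_add_left 1 t)]
          ring_nf

theorem measureReal_sum_Icc_ge_le (hFmono : Monotone F) (hF : ∀ j, F j ≤ m₀) {t : ℕ}
    (hb : ∀ j ∈ Icc 1 t, 0 < b j) (hD : ∀ j ∈ Icc 1 t, StronglyMeasurable[F j] (D j))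
    (hDb : ∀ j ∈ Icc 1 t, ∀ᵐ ω ∂μ, |D j ω| ≤ b j)
    (hDc : ∀ j ∈ Icc 1 t, μ[D j | F (j - 1)] =ᵐ[μ] 0) {ε : ℝ} (hε : 0 ≤ ε) :
    μ.real {ω | ε ≤ ∑ j ∈ Icc 1 t, D j ω} ≤ exp (-ε ^ 2 / (2 * ∑ j ∈ Icc 1 t, b j ^ 2)) := by
  set V := ∑ j ∈ Icc 1 t, b j ^ 2
  have hs : 0 ≤ ε / V := div_nonneg hε (sum_nonneg fun _ _ ↦ sq_nonneg _)
  calc μ.real {ω | ε ≤ ∑ j ∈ Icc 1 t, D j ω}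
      ≤ exp (-(ε / V) * ε) * mgf (fun ω ↦ ∑ j ∈ Icc 1 t, D j ω) μ (ε / V) :=
        measure_ge_le_exp_mul_mgf ε hs (integrable_exp_mul_sum_of_abs_le
          (fun j hj ↦ ((hD j hj).mono (hF j)).measurable.aemeasurable) hDb _)
    _ ≤ exp (-(ε / V) * ε) * exp ((ε / V) ^ 2 * V / 2) := by
        gcongr
        exact mgf_sum_Icc_le hFmono hF hb hD hDb hDc _
    _ = exp (-ε ^ 2 / (2 * V)) := by
        rw [← exp_add]
        congr 1
        rcases eq_or_ne V 0 with hV | hV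
        · simp [hV]
        · field_simp
          ring

theorem measureReal_sum_condExp_sub_ge_le (hFmono : Monotone F) (hF : ∀ j, F j ≤ m₀)
    {Y : ℕ → Ω → ℝ} {B : ℕ → ℝ} {t : ℕ} (ht : 1 ≤ t) (hB : ∀ j ∈ Icc 1 t, 0 < B j)
    (hY : ∀ j ∈ Icc 1 t, StronglyMeasurable[F j] (Y j))
    (hYB : ∀ j ∈ Icc 1 t, ∀ᵐ ω ∂μ, Y j ω ∈ Set.Icc 0 (B j)) {r : ℝ} (hr : 1 ≤ r) :
    μ.real {ω | √2 * √((∑ j ∈ Icc 1 t, B j ^ 2) * log r)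
      ≤ ∑ j ∈ Icc 1 t, (μ[Y j | F (j - 1)] ω - Y j ω)} ≤ r⁻¹ := by
  have hYi : ∀ j ∈ Icc 1 t, Integrable (Y j) μ := fun j hj ↦
    Integrable.of_mem_Icc 0 (B j) ((hY j hj).mono (hF j)).measurable.aemeasurable (hYB j hj)
  have hV : 0 < ∑ j ∈ Icc 1 t, B j ^ 2 :=
    sum_pos (fun j hj ↦ pow_pos (hB j hj) 2) ⟨1, by simpa using ht⟩
  rw [← exp_neg_sq_sqrt_div_eq_inv hV hr]
  exact measureReal_sum_Icc_ge_le (D := fun j ω ↦ μ[Y j | F (j - 1)] ω - Y j ω) hFmono hF hB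
    (fun j hj ↦ (stronglyMeasurable_condExp.mono (hFmono (Nat.sub_le j 1))).sub (hY j hj))
    (fun j hj ↦ abs_condExp_sub_le (hF _) (hYi j hj) ((hYB j hj).mono fun _ h ↦ h.1)
      ((hYB j hj).mono fun _ h ↦ h.2))
    (fun j hj ↦ condExp_condExp_sub_self (hF _) (hYi j hj)) (by positivity)

end Azuma

/-- lower bound on `Σ a_j² ‖x_j‖²` for a bounded adapted process `a`
and i.i.d. inputs `x` with concentrated norms. -/
theorem statement3 :
    ∃ c : ℝ, 0 < c ∧
    ∀ (T d : ℕ), 0 < T → 0 < d →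
    ∀ (Ω : Type) (mΩ : MeasurableSpace Ω) (μ : Measure Ω), IsProbabilityMeasure μ →
    ∀ (F : ℕ → MeasurableSpace Ω), Monotone F → (∀ t, F t ≤ mΩ) →
    ∀ (a : ℕ → Ω → ℝ) (β : ℕ → ℝ) (x : ℕ → Ω → Fin d → ℝ) (α₂ K₂ : ℝ),
    0 < α₂ → 0 < K₂ →
    -- a is adapted and almost surely bounded by the fixed constants β_t > 0
    (∀ t, 1 ≤ t → t ≤ T → 0 < β t) →
    (∀ t, 1 ≤ t → t ≤ T → Measurable[F t] (a t)) →
    (∀ t, 1 ≤ t → t ≤ T → ∀ᵐ ω ∂μ, |a t ω| ≤ β t) →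
    -- x_t is F_t-measurable, independent of F_{t-1}, and the x_t are identically distributed
    (∀ t, 1 ≤ t → t ≤ T → Measurable[F t] (x t)) →
    (∀ t, 1 ≤ t → t ≤ T →
      Indep (MeasurableSpace.comap (x t) inferInstance) (F (t - 1)) μ) →
    (∀ s t, 1 ≤ s → s ≤ T → 1 ≤ t → t ≤ T → IdentDistrib (x s) (x t) μ μ) →
    -- E‖x‖² = α₂ d and concentration of ‖x‖²
    (∀ t, 1 ≤ t → t ≤ T → ∫ ω, euclNorm (x t ω) ^ 2 ∂μ = α₂ * d) →
    (∀ t, 1 ≤ t → t ≤ T → ∀ γ : ℝ, 0 < γ →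
      μ {ω | γ ≤ |euclNorm (x t ω) ^ 2 - α₂ * d|}
        ≤ ENNReal.ofReal (2 * Real.exp (-(min (γ ^ 2 / (K₂ ^ 4 * d)) (γ / K₂ ^ 2))))) →
    ∀ δ : ℝ, 0 < δ → δ < 1 →
    -- dimension condition
    max (16 * K₂ ^ 4 / α₂ ^ 2) (4 * K₂ ^ 2 / α₂) * Real.log (2 * T / δ) ≤ d →
    ENNReal.ofReal (1 - δ) ≤
      μ {ω | ∀ t ∈ Finset.Icc 1 T,
        α₂ * d / 2 *
          ((∑ j ∈ Finset.Icc 1 t, (μ[(fun ω' => (a j ω') ^ 2) | F (j - 1)]) ω)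
            - c * Real.sqrt ((∑ j ∈ Finset.Icc 1 t, β j ^ 4) * Real.log (4 * T / δ)))
        ≤ ∑ j ∈ Finset.Icc 1 t, (a j ω) ^ 2 * euclNorm (x j ω) ^ 2} := by
  refine ⟨√2, by positivity, ?_⟩
  intro T d hT hd Ω mΩ μ hμ F hFmono hF a β x α₂ K₂ hα hK hβ ha hab _ _ _ _ hconc δ hδ hδ1 hdim
  have hTpos : (0 : ℝ) < T := Nat.cast_pos.2 hT
  have hT1 : (1 : ℝ) ≤ T := Nat.one_le_cast.2 hT
  set dev : ℕ → Set Ω := fun t ↦ {ω | α₂ * d / 2 ≤ |euclNorm (x t ω) ^ 2 - α₂ * d|}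
  set mart : ℕ → Set Ω := fun t ↦ {ω | √2 * √((∑ j ∈ Icc 1 t, β j ^ 4) * log (4 * T / δ))
    ≤ ∑ j ∈ Icc 1 t, (μ[fun ω' ↦ a j ω' ^ 2 | F (j - 1)] ω - a j ω ^ 2)}
  have hdev : ∀ t ∈ Icc 1 T, μ.real (dev t) ≤ δ / (2 * T) := fun t ht ↦
    ENNReal.toReal_le_of_le_ofReal (by positivity)
      ((hconc t (mem_Icc.1 ht).1 (mem_Icc.1 ht).2 _ (by positivity)).trans
        (ENNReal.ofReal_le_ofReal ((two_mul_exp_neg_min_le_inv hα hK (by positivity)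
          (by rw [le_div_iff₀ hδ]; nlinarith) hdim).trans_eq (inv_div _ _))))
  have hmart : ∀ t ∈ Icc 1 T, μ.real (mart t) ≤ δ / (2 * T) := by
    intro t ht
    have hj : ∀ j ∈ Icc 1 t, 1 ≤ j ∧ j ≤ T := fun j hj ↦
      ⟨(mem_Icc.1 hj).1, (mem_Icc.1 hj).2.trans (mem_Icc.1 ht).2⟩
    calc _ ≤ (4 * T / δ)⁻¹ := by
          simpa only [← pow_mul] using measureReal_sum_condExp_sub_ge_le hFmono hF
            (Y := fun j ω ↦ a j ω ^ 2) (mem_Icc.1 ht).1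
            (fun j h ↦ pow_pos (hβ j (hj j h).1 (hj j h).2) 2)
            (fun j h ↦ ((ha j (hj j h).1 (hj j h).2).pow_const 2).stronglyMeasurable)
            (fun j h ↦ (hab j (hj j h).1 (hj j h).2).mono fun ω h ↦
              ⟨sq_nonneg _, by rw [← sq_abs]; gcongr⟩)
            (by rw [le_div_iff₀ hδ]; nlinarith)
      _ ≤ δ / (2 * T) := by
          rw [inv_div]
          gcongr
          linarith
  refine (ENNReal.ofReal_le_ofReal (le_of_eq ?_)).trans
    (ofReal_one_sub_le_measure_of_forall_notMem (Icc 1 T) (p := δ / T)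
      (E := fun t ↦ dev t ∪ mart t) (fun t ht ↦ (measureReal_union_le _ _).trans
        ((add_le_add (hdev t ht) (hmart t ht)).trans_eq (by field_simp; ring))) ?_)
  · rw [Nat.card_Icc, Nat.add_sub_cancel, mul_div_cancel₀ δ hTpos.ne']
  intro ω hω t ht
  simp only [dev, mart, Set.mem_union, Set.mem_ofPred_eq, not_or, not_le] at hω
  refine mul_sum_sub_le_sum_sq_mul (by positivity) (fun j hj ↦ ?_) (hω t ht).2.le
  have := abs_lt.1 (hω j (Icc_subset_Icc_right (mem_Icc.1 ht).2 hj)).1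
  linarith

end
end

section
/- Let m, d be positive integers with m ≤ d and let ε ∈ (0, 1/2]. There exists a finite set N ⊆ S^{m−1} of cardinality at most (3/ε)^m such that for every matrix W ∈ ℝ^{m×d} and every nonzero u ∈ ℝ^d: if s_m(W) > 0 then ‖P_W u‖/‖u‖ ≤ ( sup_{v ∈ N} |uᵀ Wᵀ v| / ‖u‖ + ε ‖W‖_op ) / s_m(W); moreover, if inf_{v ∈ N} ‖Wᵀ v‖ − ε ‖W‖_op > 0, then also ‖P_W u‖/‖u‖ ≤ ( sup_{v ∈ N} |uᵀ Wᵀ v| / ‖u‖ + ε ‖W‖_op ) / ( inf_{v ∈ N} ‖Wᵀ v‖ − ε ‖W‖_op ). -/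
/-!
A maximal `ε`-separated subset of the unit sphere is an `ε`-net, and the disjoint balls of radius
`ε/2` around its points lie in the ball of radius `1 + ε/2`, so comparing volumes it has at most
`(1 + 2/ε)^m ≤ (3/ε)^m` points.

Writing `P_W u = Wᵀ c`, we get `‖P_W u‖² = ⟪W u, c⟫ ≤ ‖W u‖ ‖c‖ ≤ ‖W u‖ ‖P_W u‖ / a` as soon as
`a ‖c‖ ≤ ‖Wᵀ c‖` for all `c`. This holds for `a = s_m(W)`, and, approximating unit vectors by
points of the net, for `a = inf_N ‖Wᵀ v‖ - ε ‖W‖`. Finally, testing `W u` against the net point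
closest to `W u / ‖W u‖` gives `‖W u‖ ≤ sup_N |⟪W u, v⟫| + ε ‖W‖ ‖u‖`.
-/

open MeasureTheory

noncomputable section

/-- Euclidean inner product on `Fin n → ℝ`. -/
def dotp {n : ℕ} (v w : Fin n → ℝ) : ℝ := ∑ i, v i * w i

/-- Operator (spectral) norm of a matrix, via the Euclidean norms. -/
def opNorm {m d : ℕ} (M : Matrix (Fin m) (Fin d) ℝ) : ℝ :=
  sSup {r : ℝ | ∃ v : Fin d → ℝ, euclNorm v ≤ 1 ∧ r = euclNorm (M.mulVec v)}

/-- Smallest singular value `s_m(W) = inf_{‖v‖=1} ‖Wᵀ v‖` of `W : ℝ^{m×d}`. -/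
def smallestSV {m d : ℕ} (W : Matrix (Fin m) (Fin d) ℝ) : ℝ :=
  sInf {r : ℝ | ∃ v : Fin m → ℝ, euclNorm v = 1 ∧ r = euclNorm (W.transpose.mulVec v)}

/-- Row span of a matrix, inside `EuclideanSpace ℝ (Fin d)`. -/
def rowSpan {m d : ℕ} (W : Matrix (Fin m) (Fin d) ℝ) :
    Submodule ℝ (EuclideanSpace ℝ (Fin d)) :=
  Submodule.span ℝ (Set.range fun i => (WithLp.equiv 2 (Fin d → ℝ)).symm (W i))

/-- The `d × d` orthogonal projection matrix onto the row span of `W`. -/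
def projMat {m d : ℕ} (W : Matrix (Fin m) (Fin d) ℝ) : Matrix (Fin d) (Fin d) ℝ :=
  fun i j =>
    ((rowSpan W).orthogonalProjectionOnto (EuclideanSpace.single j 1) : EuclideanSpace ℝ (Fin d)) i

end

open Metric Module LinearMap Matrix
open scoped NNReal ENNReal RealInnerProductSpace Matrix.Norms.L2Operator
open WithLp (toLp ofLp)

theorem Metric.IsSeparated.pairwiseDisjoint_ball {X : Type*} [PseudoMetricSpace X] {ε : ℝ≥0}
    {s : Set X} (hs : IsSeparated ε s) : s.PairwiseDisjoint fun x => ball x (ε / 2) := by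
  intro x hx y hy hxy
  refine Set.disjoint_left.2 fun z hzx hzy => (hs hx hy hxy).not_ge ?_
  rw [edist_dist, ENNReal.coe_nnreal_eq]
  refine ENNReal.ofReal_le_ofReal ?_
  calc dist x y ≤ dist z x + dist z y := dist_triangle_left _ _ _
    _ ≤ ε / 2 + ε / 2 := add_le_add (mem_ball.1 hzx).le (mem_ball.1 hzy).le
    _ = ε := by ring

section Packing

variable {E : Type*} [NormedAddCommGroup E] [NormedSpace ℝ E] [FiniteDimensional ℝ E]

theorem Finset.card_le_of_isSeparated_sphere {ε : ℝ≥0} (hε : 0 < ε) {F : Finset E}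
    (hFs : (F : Set E) ⊆ sphere 0 1) (hF : IsSeparated ε (F : Set E)) :
    (F.card : ℝ) ≤ (1 + 2 / ε) ^ finrank ℝ E := by
  obtain hE | hE := subsingleton_or_nontrivial E
  · have : F = ∅ := by
      simpa [sphere_eq_empty_of_subsingleton one_ne_zero, Set.subset_empty_iff] using hFs
    simp only [this, Finset.card_empty, Nat.cast_zero]
    positivity
  borelize E
  set μ : Measure E := Measure.addHaar
  set r : ℝ := ε / 2
  have hr : 0 < r := by positivity
  have hsub : (⋃ x ∈ F, ball x r) ⊆ ball (0 : E) (1 + r) := by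
    simp only [Set.iUnion_subset_iff]
    intro x hx z hz
    rw [mem_ball_zero_iff]
    calc ‖z‖ ≤ ‖x‖ + dist z x := by rw [dist_eq_norm]; exact norm_le_insert' z x
      _ < 1 + r := by rw [mem_sphere_zero_iff_norm.1 (hFs hx)]; gcongr; exact mem_ball.1 hz
  have hvol : (F.card : ℝ≥0∞) * μ (ball 0 r) ≤ μ (ball 0 (1 + r)) := calc
    (F.card : ℝ≥0∞) * μ (ball 0 r) = ∑ x ∈ F, μ (ball x r) := by
      simp [Measure.addHaar_ball_center]
    _ = μ (⋃ x ∈ F, ball x r) :=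
      (measure_biUnion_finset hF.pairwiseDisjoint_ball fun _ _ => measurableSet_ball).symm
    _ ≤ μ (ball 0 (1 + r)) := measure_mono hsub
  -- `μ (ball 0 ρ) = ρ ^ dim * μ (ball 0 1)`: cancel `μ (ball 0 1)` and return to `ℝ`.
  rw [Measure.addHaar_ball μ 0 hr.le, Measure.addHaar_ball μ 0 (by positivity : 0 ≤ 1 + r),
    ← mul_assoc,
    ENNReal.mul_le_mul_iff_left (measure_ball_pos μ 0 one_pos).ne' measure_ball_lt_top.ne,
    ← ENNReal.ofReal_natCast, ← ENNReal.ofReal_mul (by positivity),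
    ENNReal.ofReal_le_ofReal_iff (by positivity), ← le_div_iff₀ (by positivity), ← div_pow] at hvol
  refine hvol.trans_eq (congrArg (· ^ _) ?_)
  field_simp [r]
  ring

theorem packingNumber_sphere_le {ε : ℝ≥0} (hε : 0 < ε) :
    packingNumber ε (sphere (0 : E) 1) ≤ ⌊(1 + 2 / ε : ℝ) ^ finrank ℝ E⌋₊ := by
  refine iSup₂_le fun C hC => iSup_le fun hsep => ?_
  by_contra! hlt
  obtain ⟨t, htC, ht⟩ := Set.exists_subset_encard_eq (Order.add_one_le_of_lt hlt)
  have htfin : t.Finite := Set.finite_of_encard_eq_coe ht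
  have hcard := htfin.toFinset.card_le_of_isSeparated_sphere hε (by simpa using htC.trans hC)
    (by simpa using hsep.subset htC)
  rw [← Set.ncard_eq_toFinset_card t htfin, Set.ncard_def, ht] at hcard
  exact (Nat.lt_floor_add_one _).not_ge (by exact_mod_cast hcard)

theorem exists_finset_isCover_sphere {ε : ℝ≥0} (hε : 0 < ε) :
    ∃ N : Finset E, (N : Set E) ⊆ sphere 0 1 ∧ IsCover ε (sphere 0 1) (N : Set E) ∧
      (N.card : ℝ) ≤ (1 + 2 / ε) ^ finrank ℝ E := by
  have hpack := packingNumber_sphere_le (E := E) hε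
  have hfin : packingNumber ε (sphere (0 : E) 1) ≠ ⊤ := ne_top_of_le_ne_top (by simp) hpack
  have hencard := encard_maximalSeparatedSet hfin
  have hN : (maximalSeparatedSet ε (sphere (0 : E) 1)).Finite :=
    Set.finite_of_encard_le_coe (hencard.trans_le hpack)
  refine ⟨hN.toFinset, by simpa using maximalSeparatedSet_subset,
    by simpa using isCover_maximalSeparatedSet hfin, ?_⟩
  have : (hN.toFinset.card : ℕ∞) ≤ ⌊(1 + 2 / ε : ℝ) ^ finrank ℝ E⌋₊ := by
    rw [← Set.encard_coe_eq_coe_finsetCard, hN.coe_toFinset, hencard]; exact hpack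
  exact (Nat.cast_le.2 (by exact_mod_cast this)).trans (Nat.floor_le (by positivity))

end Packing

theorem exists_finset_isCover_sphere_euclideanSpace (m : ℕ) {ε : ℝ≥0} (hε₀ : 0 < ε)
    (hε₁ : ε ≤ 1) :
    ∃ N : Finset (EuclideanSpace ℝ (Fin m)), (N : Set (EuclideanSpace ℝ (Fin m))) ⊆ sphere 0 1 ∧
      IsCover ε (sphere 0 1) (N : Set (EuclideanSpace ℝ (Fin m))) ∧ (N.card : ℝ) ≤ (3 / ε) ^ m := by
  obtain ⟨N, hNs, hN, hcard⟩ := exists_finset_isCover_sphere (E := EuclideanSpace ℝ (Fin m)) hε₀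
  refine ⟨N, hNs, hN, hcard.trans ?_⟩
  rw [finrank_euclideanSpace_fin]
  gcongr
  have hε : (0 : ℝ) < ε := hε₀
  have hε' : (ε : ℝ) ≤ 1 := hε₁
  rw [le_div_iff₀ hε, add_mul, div_mul_cancel₀ (2 : ℝ) hε.ne']
  linarith

theorem Metric.IsCover.exists_norm_sub_le {E : Type*} [SeminormedAddCommGroup E] {ε : ℝ≥0}
    {s N : Set E} (h : IsCover ε s N) {x : E} (hx : x ∈ s) : ∃ y ∈ N, ‖x - y‖ ≤ ε := by
  simpa [dist_eq_norm] using isCover_iff_subset_iUnion_closedBall.1 h hx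

section InnerProductSpace

variable {E F : Type*} [NormedAddCommGroup E] [InnerProductSpace ℝ E]
  [NormedAddCommGroup F] [InnerProductSpace ℝ F]

theorem LinearMap.mul_norm_le_norm_apply_of_sphere (T : E →ₗ[ℝ] F) {a : ℝ}
    (h : ∀ v ∈ sphere (0 : E) 1, a ≤ ‖T v‖) (x : E) : a * ‖x‖ ≤ ‖T x‖ := by
  rcases eq_or_ne x 0 with rfl | hx
  · simp
  have hx' : 0 < ‖x‖ := norm_pos_iff.2 hx
  have hv : ‖x‖⁻¹ • x ∈ sphere (0 : E) 1 := by
    rw [mem_sphere_zero_iff_norm, norm_smul, norm_inv, norm_norm, inv_mul_cancel₀ hx'.ne']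
  have := h _ hv
  rw [map_smul, norm_smul, norm_inv, norm_norm, ← div_eq_inv_mul, le_div_iff₀ hx'] at this
  exact this

theorem norm_le_of_isCover_sphere {ε : ℝ≥0} {N : Set E} (hN : IsCover ε (sphere 0 1) N)
    {x : E} {B : ℝ} (hB₀ : 0 ≤ B) (hB : ∀ v ∈ N, |⟪x, v⟫| ≤ B) : ‖x‖ ≤ B + ε * ‖x‖ := by
  rcases eq_or_ne x 0 with rfl | hx
  · simpa using hB₀
  have hx' : 0 < ‖x‖ := norm_pos_iff.2 hx
  have hv : ‖x‖⁻¹ • x ∈ sphere (0 : E) 1 := by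
    rw [mem_sphere_zero_iff_norm, norm_smul, norm_inv, norm_norm, inv_mul_cancel₀ hx'.ne']
  obtain ⟨v', hv'N, hvv'⟩ := hN.exists_norm_sub_le hv
  calc ‖x‖ = ⟪x, ‖x‖⁻¹ • x⟫ := by
        rw [real_inner_smul_right, real_inner_self_eq_norm_sq]; field_simp
    _ = ⟪x, v'⟫ + ⟪x, ‖x‖⁻¹ • x - v'⟫ := by rw [inner_sub_right]; ring
    _ ≤ |⟪x, v'⟫| + ‖x‖ * ‖‖x‖⁻¹ • x - v'‖ :=
        add_le_add (le_abs_self _) (real_inner_le_norm _ _)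
    _ ≤ B + ε * ‖x‖ := by
        rw [mul_comm (ε : ℝ)]; gcongr; exact hB v' hv'N

theorem LinearMap.sub_mul_norm_le_norm_apply_of_isCover_sphere (T : E →ₗ[ℝ] F) {C : ℝ}
    (hC : ∀ x, ‖T x‖ ≤ C * ‖x‖) {ε : ℝ≥0} {N : Set E} (hN : IsCover ε (sphere 0 1) N) {a : ℝ}
    (ha : ∀ v ∈ N, a ≤ ‖T v‖) (x : E) : (a - ε * C) * ‖x‖ ≤ ‖T x‖ := by
  refine T.mul_norm_le_norm_apply_of_sphere (fun v hv => ?_) x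
  obtain ⟨v', hv'N, hvv'⟩ := hN.exists_norm_sub_le hv
  have hC₀ : 0 ≤ C := by simpa [mem_sphere_zero_iff_norm.1 hv] using (norm_nonneg _).trans (hC v)
  calc a - ε * C ≤ ‖T v'‖ - ‖T (v - v')‖ := by
        have := hC (v - v'); have := ha v' hv'N; nlinarith
    _ ≤ ‖T v‖ := by
        rw [map_sub, norm_sub_rev]; linarith [norm_sub_norm_le (T v') (T v)]

theorem LinearMap.norm_starProjection_le_of_le_range [FiniteDimensional ℝ E]
    [FiniteDimensional ℝ F] (T : E →ₗ[ℝ] F) {K : Submodule ℝ F}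
    [K.HasOrthogonalProjection] (hK : K ≤ range T) {a : ℝ} (ha : 0 < a)
    (hT : ∀ c, a * ‖c‖ ≤ ‖T c‖) (u : F) : ‖K.starProjection u‖ ≤ ‖T.adjoint u‖ / a := by
  set p := K.starProjection u
  have hp : p ∈ K := K.starProjection_apply_mem u
  obtain ⟨c, hc⟩ := hK hp
  have hsq : ‖p‖ ^ 2 = ⟪T.adjoint u, c⟫ := by
    rw [adjoint_inner_left, hc, ← real_inner_self_eq_norm_sq]
    have h0 : ⟪u - p, p⟫ = 0 := K.starProjection_inner_eq_zero u p hp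
    rw [inner_sub_left] at h0
    linarith
  have key : a * ‖p‖ ^ 2 ≤ ‖T.adjoint u‖ * ‖p‖ := calc
    a * ‖p‖ ^ 2 ≤ a * (‖T.adjoint u‖ * ‖c‖) := by
      gcongr; exact hsq ▸ real_inner_le_norm _ _
    _ = ‖T.adjoint u‖ * (a * ‖c‖) := by ring
    _ ≤ ‖T.adjoint u‖ * ‖p‖ := by gcongr; exact hc ▸ hT c
  rw [le_div_iff₀ ha]
  rcases (norm_nonneg p).eq_or_lt with h | h
  · rw [← h, zero_mul]; exact norm_nonneg _
  · nlinarith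

end InnerProductSpace

theorem euclNorm_eq_norm {n : ℕ} (v : Fin n → ℝ) : euclNorm v = ‖toLp 2 v‖ := by
  simp [euclNorm, EuclideanSpace.norm_eq]

theorem dotp_eq_inner {n : ℕ} (v w : Fin n → ℝ) : dotp v w = ⟪toLp 2 v, toLp 2 w⟫ := by
  simp [dotp, PiLp.inner_apply, mul_comm]

theorem dotp_transpose_mulVec {m d : ℕ} (W : Matrix (Fin m) (Fin d) ℝ) (u : Fin d → ℝ)
    (v : Fin m → ℝ) : dotp u (Wᵀ *ᵥ v) = ⟪toLp 2 (W *ᵥ u), toLp 2 v⟫ := by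
  rw [← dotp_eq_inner]
  change u ⬝ᵥ (Wᵀ *ᵥ v) = (W *ᵥ u) ⬝ᵥ v
  rw [dotProduct_mulVec, vecMul_transpose, dotProduct_comm]

theorem opNorm_eq_l2_opNorm {m d : ℕ} (W : Matrix (Fin m) (Fin d) ℝ) : opNorm W = ‖W‖ := by
  rw [l2_opNorm_def, ← ContinuousLinearMap.sSup_unitClosedBall_eq_norm, opNorm]
  congr 1
  ext r
  constructor
  · rintro ⟨v, hv, rfl⟩
    exact ⟨toLp 2 v, by simpa [euclNorm_eq_norm] using hv,
      by simp [euclNorm_eq_norm, toLpLin_apply]⟩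
  · rintro ⟨x, hx, rfl⟩
    exact ⟨ofLp x, by simpa [euclNorm_eq_norm] using hx,
      by simp [euclNorm_eq_norm, toLpLin_apply]⟩

theorem toLp_projMat_mulVec {m d : ℕ} (W : Matrix (Fin m) (Fin d) ℝ) (u : Fin d → ℝ) :
    toLp 2 (projMat W *ᵥ u) = (rowSpan W).starProjection (toLp 2 u) := by
  suffices toEuclideanLin (projMat W) = (rowSpan W).starProjection.toLinearMap from
    congr($this (toLp 2 u))
  refine (EuclideanSpace.basisFun (Fin d) ℝ).toBasis.ext fun j => ?_
  ext i
  simp [projMat]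

theorem rowSpan_le_range {m d : ℕ} (W : Matrix (Fin m) (Fin d) ℝ) :
    rowSpan W ≤ range (toEuclideanLin Wᵀ) := by
  refine Submodule.span_le.2 (Set.range_subset_iff.2 fun i => ⟨EuclideanSpace.single i 1, ?_⟩)
  ext j
  simp

theorem adjoint_toEuclideanLin_transpose {m d : ℕ} (W : Matrix (Fin m) (Fin d) ℝ) :
    (toEuclideanLin Wᵀ).adjoint = toEuclideanLin W := by
  rw [← conjTranspose_eq_transpose_of_trivial, toEuclideanLin_conjTranspose_eq_adjoint,
    adjoint_adjoint]

theorem smallestSV_mul_norm_le {m d : ℕ} (W : Matrix (Fin m) (Fin d) ℝ)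
    (c : EuclideanSpace ℝ (Fin m)) : smallestSV W * ‖c‖ ≤ ‖toEuclideanLin Wᵀ c‖ := by
  refine (toEuclideanLin Wᵀ).mul_norm_le_norm_apply_of_sphere (fun v hv => ?_) c
  refine csInf_le ⟨0, ?_⟩ ⟨ofLp v, by simpa [euclNorm_eq_norm] using hv,
    by simp [euclNorm_eq_norm, toLpLin_apply]⟩
  rintro _ ⟨w, -, rfl⟩
  exact Real.sqrt_nonneg _

theorem norm_toLp_mulVec_le {m d : ℕ} (W : Matrix (Fin m) (Fin d) ℝ) (u : Fin d → ℝ) :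
    ‖toLp 2 (W *ᵥ u)‖ ≤ opNorm W * euclNorm u := by
  rw [opNorm_eq_l2_opNorm, euclNorm_eq_norm]
  exact l2_opNorm_mulVec W (toLp 2 u)

theorem norm_toEuclideanLin_transpose_le {m d : ℕ} (W : Matrix (Fin m) (Fin d) ℝ)
    (x : EuclideanSpace ℝ (Fin m)) : ‖toEuclideanLin Wᵀ x‖ ≤ opNorm W * ‖x‖ := by
  rw [opNorm_eq_l2_opNorm, ← l2_opNorm_conjTranspose, conjTranspose_eq_transpose_of_trivial]
  exact l2_opNorm_mulVec Wᵀ x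

theorem euclNorm_projMat_mulVec_le {m d : ℕ} (W : Matrix (Fin m) (Fin d) ℝ) (u : Fin d → ℝ)
    {a : ℝ} (ha : 0 < a) (hW : ∀ c, a * ‖c‖ ≤ ‖toEuclideanLin Wᵀ c‖) :
    euclNorm (projMat W *ᵥ u) ≤ euclNorm (W *ᵥ u) / a := by
  rw [euclNorm_eq_norm, euclNorm_eq_norm, toLp_projMat_mulVec]
  have := (toEuclideanLin Wᵀ).norm_starProjection_le_of_le_range (rowSpan_le_range W) ha hW
    (toLp 2 u)
  rwa [adjoint_toEuclideanLin_transpose] at this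

theorem euclNorm_mulVec_le_of_isCover {m d : ℕ} {ε : ℝ≥0} {N : Set (EuclideanSpace ℝ (Fin m))}
    (hN : IsCover ε (sphere 0 1) N) (W : Matrix (Fin m) (Fin d) ℝ) (u : Fin d → ℝ) {B : ℝ}
    (hB₀ : 0 ≤ B) (hB : ∀ v ∈ N, |dotp u (Wᵀ *ᵥ ofLp v)| ≤ B) :
    euclNorm (W *ᵥ u) ≤ B + ε * opNorm W * euclNorm u := by
  have hnet := norm_le_of_isCover_sphere hN hB₀ (x := toLp 2 (W *ᵥ u))
    (fun v hv => by simpa [dotp_transpose_mulVec] using hB v hv)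
  rw [euclNorm_eq_norm]
  calc ‖toLp 2 (W *ᵥ u)‖ ≤ B + ε * ‖toLp 2 (W *ᵥ u)‖ := hnet
    _ ≤ B + ε * (opNorm W * euclNorm u) := by gcongr; exact norm_toLp_mulVec_le W u
    _ = B + ε * opNorm W * euclNorm u := by ring

theorem statement6_general (m d : ℕ)
    (ε : ℝ) (hε0 : 0 < ε) (hε : ε ≤ 1 / 2) :
    ∃ N : Finset (Fin m → ℝ),
      (N.card : ℝ) ≤ (3 / ε) ^ m ∧
      (∀ v ∈ N, euclNorm v = 1) ∧
      ∀ (W : Matrix (Fin m) (Fin d) ℝ) (u : Fin d → ℝ), u ≠ 0 →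
        (0 < smallestSV W →
          euclNorm ((projMat W).mulVec u) / euclNorm u
            ≤ (sSup ((fun v => |dotp u (W.transpose.mulVec v)|) '' (N : Set (Fin m → ℝ)))
                  / euclNorm u + ε * opNorm W) / smallestSV W) ∧
        (0 < sInf ((fun v => euclNorm (W.transpose.mulVec v)) '' (N : Set (Fin m → ℝ)))
              - ε * opNorm W →
          euclNorm ((projMat W).mulVec u) / euclNorm u
            ≤ (sSup ((fun v => |dotp u (W.transpose.mulVec v)|) '' (N : Set (Fin m → ℝ)))
                  / euclNorm u + ε * opNorm W)
              / (sInf ((fun v => euclNorm (W.transpose.mulVec v)) '' (N : Set (Fin m → ℝ)))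
                  - ε * opNorm W)) := by
  lift ε to ℝ≥0 using hε0.le
  obtain ⟨N₀, hN₀s, hN₀, hcard⟩ :=
    exists_finset_isCover_sphere_euclideanSpace m (by exact_mod_cast hε0)
      (by exact_mod_cast (by linarith : (ε : ℝ) ≤ 1))
  refine ⟨N₀.image ofLp, (Nat.cast_le.2 Finset.card_image_le).trans hcard, ?_, fun W u hu => ?_⟩
  · intro _ hv
    obtain ⟨v, hvN, rfl⟩ := Finset.mem_image.1 hv
    simpa [euclNorm_eq_norm] using hN₀s hvN
  set S := sSup ((fun v => |dotp u (Wᵀ *ᵥ v)|) '' ((N₀.image ofLp : Finset _) : Set (Fin m → ℝ)))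
  have hS₀ : 0 ≤ S := Real.sSup_nonneg (by rintro _ ⟨v, -, rfl⟩; exact abs_nonneg _)
  have hWu := euclNorm_mulVec_le_of_isCover hN₀ W u hS₀ fun v hv =>
    le_csSup ((Finset.finite_toSet _).image _).bddAbove ⟨ofLp v, by simpa using ⟨v, hv, rfl⟩, rfl⟩
  have hu₀ : 0 < euclNorm u := by simpa [euclNorm_eq_norm] using hu
  have key : ∀ a, 0 < a → (∀ c, a * ‖c‖ ≤ ‖toEuclideanLin Wᵀ c‖) →
      euclNorm (projMat W *ᵥ u) / euclNorm u ≤ (S / euclNorm u + ε * opNorm W) / a := by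
    intro a ha hW
    calc euclNorm (projMat W *ᵥ u) / euclNorm u ≤ euclNorm (W *ᵥ u) / a / euclNorm u := by
          gcongr; exact euclNorm_projMat_mulVec_le W u ha hW
      _ ≤ (S + ε * opNorm W * euclNorm u) / a / euclNorm u := by gcongr
      _ = (S / euclNorm u + ε * opNorm W) / a := by field_simp
  refine ⟨fun hs => key _ hs (smallestSV_mul_norm_le W), fun hI => key _ hI ?_⟩
  refine (toEuclideanLin Wᵀ).sub_mul_norm_le_norm_apply_of_isCover_sphere
    (norm_toEuclideanLin_transpose_le W) hN₀ fun v hv => csInf_le ⟨0, ?_⟩ ⟨ofLp v, ?_, ?_⟩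
  · rintro _ ⟨w, -, rfl⟩
    exact Real.sqrt_nonneg _
  · simpa using ⟨v, hv, rfl⟩
  · simp [euclNorm_eq_norm, toLpLin_apply]

/-- covering argument controlling `‖P_W u‖ / ‖u‖` via an ε-net of the
unit sphere in `ℝ^m`. -/
theorem statement6 (m d : ℕ) (hm : 0 < m) (hd : 0 < d)
    (ε : ℝ) (hε0 : 0 < ε) (hε : ε ≤ 1 / 2) :
    ∃ N : Finset (Fin m → ℝ),
      (N.card : ℝ) ≤ (3 / ε) ^ m ∧
      (∀ v ∈ N, euclNorm v = 1) ∧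
      ∀ (W : Matrix (Fin m) (Fin d) ℝ) (u : Fin d → ℝ), u ≠ 0 →
        (0 < smallestSV W →
          euclNorm ((projMat W).mulVec u) / euclNorm u
            ≤ (sSup ((fun v => |dotp u (W.transpose.mulVec v)|) '' (N : Set (Fin m → ℝ)))
                  / euclNorm u + ε * opNorm W) / smallestSV W) ∧
        (0 < sInf ((fun v => euclNorm (W.transpose.mulVec v)) '' (N : Set (Fin m → ℝ)))
              - ε * opNorm W →
          euclNorm ((projMat W).mulVec u) / euclNorm u
            ≤ (sSup ((fun v => |dotp u (W.transpose.mulVec v)|) '' (N : Set (Fin m → ℝ)))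
                  / euclNorm u + ε * opNorm W)
              / (sInf ((fun v => euclNorm (W.transpose.mulVec v)) '' (N : Set (Fin m → ℝ)))
                  - ε * opNorm W)) :=
  statement6_general m d ε hε0 hε
end

section
/- Let d, n be positive integers and let φ : {−1,1}^d × {−1,1} → ℝ^n satisfy ‖φ(x, y)‖ ≤ 1 for all (x, y). For i ∈ {1, …, d} define E_i := 2^{−d} Σ_{x ∈ {−1,1}^d} φ(x, x_i) (the expectation of φ under the distribution of (x, x_i) with x uniform), and define E₀ := 2^{−(d+1)} Σ_{x ∈ {−1,1}^d} Σ_{y ∈ {−1,1}} φ(x, y) (the expectation under the uniform distribution on {−1,1}^{d+1}). Then Σ_{i=1}^d ‖E_i − E₀‖² ≤ 2^{−(d+1)} Σ_{x ∈ {−1,1}^d} Σ_{y ∈ {−1,1}} ‖φ(x, y)‖² ≤ 1. -/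
noncomputable section

/-- The sign `±1` encoded by a Boolean. -/
def pmOne (b : Bool) : ℝ := if b then 1 else -1

lemma orth {d : ℕ} {i k : Fin d} (h : i ≠ k) :
    ∑ x : Fin d → Bool, pmOne (x i) * pmOne (x k) = 0 := by
  have hinv : Function.Involutive (fun x : Fin d → Bool => Function.update x i (!x i)) := by
    intro x
    funext l
    by_cases hl : l = i
    · subst hl; simp
    · simp [Function.update_of_ne hl]
  have := Equiv.sum_comp hinv.toPerm (fun x : Fin d → Bool => pmOne (x i) * pmOne (x k))
  have hneg : ∀ x : Fin d → Bool,
      pmOne (Function.update x i (!x i) i) * pmOne (Function.update x i (!x i) k)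
        = -(pmOne (x i) * pmOne (x k)) := by
    intro x
    rw [Function.update_self, Function.update_of_ne (Ne.symm h)]
    cases x i <;> cases x k <;> simp [pmOne]
  have h2 : ∑ x : Fin d → Bool, pmOne (x i) * pmOne (x k)
      = -∑ x : Fin d → Bool, pmOne (x i) * pmOne (x k) := by
    conv_lhs => rw [← this]
    simp only [Function.Involutive.coe_toPerm]
    rw [← Finset.sum_neg_distrib]
    exact Finset.sum_congr rfl fun x _ => hneg x
  linarith

lemma bessel {ι T : Type*} [Fintype ι] [DecidableEq ι] [Fintype T] (M : ℝ) (hM : 0 < M)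
    (g : ι → T → ℝ) (hg : ∀ i j, ∑ t, g i t * g j t = (if i = j then M else 0))
    (f : T → ℝ) : ∑ i, (∑ t, g i t * f t) ^ 2 ≤ M * ∑ t, f t ^ 2 := by
  set c : ι → ℝ := fun i => ∑ t, g i t * f t with hc
  have h0 : (0:ℝ) ≤ ∑ t, (f t - ∑ i, (c i / M) * g i t) ^ 2 :=
    Finset.sum_nonneg fun _ _ => sq_nonneg _
  have hA : ∑ t, (f t * ∑ i, (c i / M) * g i t) = (∑ i, c i ^ 2) / M := by
    calc ∑ t, f t * ∑ i, (c i / M) * g i t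
        = ∑ t, ∑ i, (c i / M) * (g i t * f t) := by
          refine Finset.sum_congr rfl fun t _ => ?_
          rw [Finset.mul_sum]
          exact Finset.sum_congr rfl fun i _ => by ring
      _ = ∑ i, ∑ t, (c i / M) * (g i t * f t) := Finset.sum_comm
      _ = ∑ i, (c i / M) * c i := by
          refine Finset.sum_congr rfl fun i _ => ?_
          rw [← Finset.mul_sum]
      _ = (∑ i, c i ^ 2) / M := by
          rw [Finset.sum_div]
          refine Finset.sum_congr rfl fun i _ => by ring
  have hB : ∑ t, (∑ i, (c i / M) * g i t) ^ 2 = (∑ i, c i ^ 2) / M := by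
    calc ∑ t, (∑ i, (c i / M) * g i t) ^ 2
        = ∑ t, ∑ i, ∑ j, (c i / M) * (c j / M) * (g i t * g j t) := by
          refine Finset.sum_congr rfl fun t _ => ?_
          rw [sq, Finset.sum_mul_sum]
          exact Finset.sum_congr rfl fun i _ => Finset.sum_congr rfl fun j _ => by ring
      _ = ∑ i, ∑ j, ∑ t, (c i / M) * (c j / M) * (g i t * g j t) := by
          rw [Finset.sum_comm]
          exact Finset.sum_congr rfl fun i _ => Finset.sum_comm
      _ = ∑ i, ∑ j, (c i / M) * (c j / M) * ∑ t, g i t * g j t := by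
          refine Finset.sum_congr rfl fun i _ => Finset.sum_congr rfl fun j _ => ?_
          rw [Finset.mul_sum]
      _ = (∑ i, c i ^ 2) / M := by
          simp only [hg, mul_ite, mul_zero]
          rw [Finset.sum_div]
          refine Finset.sum_congr rfl fun i _ => ?_
          rw [Finset.sum_ite_eq (Finset.univ) i (fun j => c i / M * (c j / M) * M)]
          simp only [Finset.mem_univ, if_true]
          field_simp
  have hexp : ∑ t, (f t - ∑ i, (c i / M) * g i t) ^ 2
      = ∑ t, f t ^ 2 - (∑ i, c i ^ 2) / M := by
    have h1 : ∀ t ∈ Finset.univ, (f t - ∑ i, (c i / M) * g i t) ^ 2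
        = f t ^ 2 - 2 * (f t * ∑ i, (c i / M) * g i t) + (∑ i, (c i / M) * g i t) ^ 2 :=
      fun t _ => by ring
    rw [Finset.sum_congr rfl h1, Finset.sum_add_distrib, Finset.sum_sub_distrib,
      ← Finset.mul_sum, hA, hB]
    ring
  rw [hexp] at h0
  have h3 : (∑ i, c i ^ 2) / M ≤ ∑ t, f t ^ 2 := by linarith
  calc ∑ i, c i ^ 2 = ((∑ i, c i ^ 2) / M) * M := by field_simp
    _ ≤ (∑ t, f t ^ 2) * M := mul_le_mul_of_nonneg_right h3 hM.le
    _ = M * ∑ t, f t ^ 2 := by ring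

/-- the statistical-query average discrepancy bound for the coordinate
functions on the Boolean hypercube. -/
theorem statement18 (d n : ℕ) (hd : 0 < d) (hn : 0 < n)
    (φ : (Fin d → ℝ) → ℝ → (Fin n → ℝ))
    (hφ : ∀ (x : Fin d → Bool) (y : Bool),
      euclNorm (φ (fun l => pmOne (x l)) (pmOne y)) ≤ 1) :
    (∑ i : Fin d,
        euclNorm (fun j =>
          ((2 : ℝ) ^ d)⁻¹ * ∑ x : Fin d → Bool, φ (fun l => pmOne (x l)) (pmOne (x i)) j
            - ((2 : ℝ) ^ (d + 1))⁻¹ *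
                ∑ x : Fin d → Bool, ∑ y : Bool, φ (fun l => pmOne (x l)) (pmOne y) j) ^ 2
      ≤ ((2 : ℝ) ^ (d + 1))⁻¹ *
          ∑ x : Fin d → Bool, ∑ y : Bool, euclNorm (φ (fun l => pmOne (x l)) (pmOne y)) ^ 2)
    ∧ ((2 : ℝ) ^ (d + 1))⁻¹ *
          ∑ x : Fin d → Bool, ∑ y : Bool, euclNorm (φ (fun l => pmOne (x l)) (pmOne y)) ^ 2
        ≤ 1 := by
  set P : ℝ := (2:ℝ) ^ (d+1) with hP
  have hPpos : (0:ℝ) < P := by positivity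
  have hcard : (Fintype.card (Fin d → Bool) : ℝ) = 2 ^ d := by
    simp [Fintype.card_fun]
  set F : Fin n → (Fin d → Bool) × Bool → ℝ :=
    fun j p => φ (fun l => pmOne (p.1 l)) (pmOne p.2) j with hF
  set G : Fin d → (Fin d → Bool) × Bool → ℝ :=
    fun i p => pmOne (p.1 i) * pmOne p.2 with hG
  have hg : ∀ i k : Fin d,
      ∑ p : (Fin d → Bool) × Bool, G i p * G k p = if i = k then P else 0 := by
    intro i k
    rw [Fintype.sum_prod_type]
    have hinner : ∀ x : Fin d → Bool, ∑ y : Bool, G i (x, y) * G k (x, y)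
        = 2 * (pmOne (x i) * pmOne (x k)) := by
      intro x
      rw [Fintype.sum_bool]
      simp only [hG]
      cases x i <;> cases x k <;> simp [pmOne] <;> ring
    rw [Finset.sum_congr rfl fun x _ => hinner x]
    by_cases h : i = k
    · subst h
      have h1 : ∀ x : Fin d → Bool, 2 * (pmOne (x i) * pmOne (x i)) = 2 := by
        intro x; cases x i <;> simp [pmOne]
      rw [Finset.sum_congr rfl fun x _ => h1 x, Finset.sum_const, if_pos rfl]
      rw [Finset.card_univ, nsmul_eq_mul, hcard, hP, pow_succ]
    · rw [if_neg h, ← Finset.mul_sum, orth h, mul_zero]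
  have hnormsq : ∀ v : Fin n → ℝ, euclNorm v ^ 2 = ∑ j, v j ^ 2 :=
    fun v => Real.sq_sqrt (Finset.sum_nonneg fun _ _ => sq_nonneg _)
  have key : ∀ (i : Fin d) (j : Fin n),
      ((2:ℝ)^d)⁻¹ * ∑ x : Fin d → Bool, φ (fun l => pmOne (x l)) (pmOne (x i)) j
        - P⁻¹ * ∑ x : Fin d → Bool, ∑ y : Bool, φ (fun l => pmOne (x l)) (pmOne y) j
      = P⁻¹ * ∑ p : (Fin d → Bool) × Bool, G i p * F j p := by
    intro i j
    rw [Fintype.sum_prod_type]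
    have hpt : ∀ x : Fin d → Bool,
        ∑ y : Bool, G i (x, y) * F j (x, y)
          = 2 * φ (fun l => pmOne (x l)) (pmOne (x i)) j
              - ∑ y : Bool, φ (fun l => pmOne (x l)) (pmOne y) j := by
      intro x
      rw [Fintype.sum_bool, Fintype.sum_bool]
      simp only [hG, hF]
      cases hxi : x i <;> simp [pmOne, hxi] <;> ring
    rw [Finset.sum_congr rfl fun x _ => hpt x, Finset.sum_sub_distrib, ← Finset.mul_sum]
    have h2 : P⁻¹ * 2 = ((2:ℝ)^d)⁻¹ := by
      rw [hP, pow_succ]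
      field_simp
    rw [mul_sub, ← mul_assoc, h2]
  constructor
  · calc ∑ i : Fin d,
        euclNorm (fun j =>
          ((2 : ℝ) ^ d)⁻¹ * ∑ x : Fin d → Bool, φ (fun l => pmOne (x l)) (pmOne (x i)) j
            - P⁻¹ *
                ∑ x : Fin d → Bool, ∑ y : Bool, φ (fun l => pmOne (x l)) (pmOne y) j) ^ 2
        = ∑ i : Fin d, ∑ j : Fin n,
            (P⁻¹ * ∑ p : (Fin d → Bool) × Bool, G i p * F j p) ^ 2 := by
          refine Finset.sum_congr rfl fun i _ => ?_
          rw [hnormsq]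
          exact Finset.sum_congr rfl fun j _ => by rw [key i j]
      _ = P⁻¹ ^ 2 * ∑ j : Fin n, ∑ i : Fin d,
            (∑ p : (Fin d → Bool) × Bool, G i p * F j p) ^ 2 := by
          simp only [mul_pow]
          rw [Finset.sum_comm, Finset.mul_sum]
          exact Finset.sum_congr rfl fun j _ => (Finset.mul_sum _ _ _).symm
      _ ≤ P⁻¹ ^ 2 * ∑ j : Fin n, (P * ∑ p : (Fin d → Bool) × Bool, F j p ^ 2) := by
          refine mul_le_mul_of_nonneg_left
            (Finset.sum_le_sum fun j _ => bessel P hPpos G hg (F j)) (by positivity)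
      _ = P⁻¹ * ∑ p : (Fin d → Bool) × Bool, ∑ j : Fin n, F j p ^ 2 := by
          rw [← Finset.mul_sum, ← mul_assoc, sq, mul_assoc P⁻¹, inv_mul_cancel₀ hPpos.ne',
            mul_one, Finset.sum_comm]
      _ = P⁻¹ * ∑ x : Fin d → Bool, ∑ y : Bool,
            euclNorm (φ (fun l => pmOne (x l)) (pmOne y)) ^ 2 := by
          rw [Fintype.sum_prod_type]
          congr 1
          refine Finset.sum_congr rfl fun x _ => Finset.sum_congr rfl fun y _ => ?_
          rw [hnormsq]
  · have hb : ∀ (x : Fin d → Bool) (y : Bool),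
        euclNorm (φ (fun l => pmOne (x l)) (pmOne y)) ^ 2 ≤ 1 := by
      intro x y
      have h0 : (0:ℝ) ≤ euclNorm (φ (fun l => pmOne (x l)) (pmOne y)) := Real.sqrt_nonneg _
      nlinarith [hφ x y]
    have hS : ∑ x : Fin d → Bool, ∑ y : Bool,
        euclNorm (φ (fun l => pmOne (x l)) (pmOne y)) ^ 2 ≤ P := by
      calc ∑ x : Fin d → Bool, ∑ y : Bool,
            euclNorm (φ (fun l => pmOne (x l)) (pmOne y)) ^ 2
          ≤ ∑ _x : Fin d → Bool, ∑ _y : Bool, (1:ℝ) :=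
            Finset.sum_le_sum fun x _ => Finset.sum_le_sum fun y _ => hb x y
        _ = P := by
            simp only [Finset.sum_const, Finset.card_univ, nsmul_eq_mul, mul_one]
            rw [hP, pow_succ]
            simp [Fintype.card_fun]
    calc P⁻¹ * ∑ x : Fin d → Bool, ∑ y : Bool,
          euclNorm (φ (fun l => pmOne (x l)) (pmOne y)) ^ 2
        ≤ P⁻¹ * P := mul_le_mul_of_nonneg_left hS (by positivity)
      _ = 1 := inv_mul_cancel₀ hPpos.ne'


end
end
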